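/- Let N = n₁⋯n_p with all nᵢ ≥ 1. If k·(1 − p + Σ_{i=1}^{p} nᵢ²) < N² (as integers), then Σ^k(n₁,…,n_p) has (N²−1)-dimensional Hausdorff measure zero in the space of I×I complex matrices; in particular it has measure zero in the set of separable states. -/

import Mathlib

open scoped ComplexOrder
open MeasureTheory

/-- A density matrix: positive semidefinite (hence Hermitian) with trace 1. -/
def IsDensityMatrix {m : Type*} [Fintype m] [DecidableEq m] (A : Matrix m m ℂ) : Prop :=
  A.PosSemidef ∧ A.trace = 1

/-- A pure density matrix: a density matrix of rank one. -/
def IsPureDensityMatrix {m : Type*} [Fintype m] [DecidableEq m] (A : Matrix m m ℂ) : Prop :=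
  IsDensityMatrix A ∧ A.rank = 1

/-- Tensor (Kronecker) product of the matrices `B i` over all `p` particles. -/
def prodMat {p : ℕ} (n : Fin p → ℕ) (B : ∀ i, Matrix (Fin (n i)) (Fin (n i)) ℂ) :
    Matrix (∀ i, Fin (n i)) (∀ i, Fin (n i)) ℂ :=
  fun x y => ∏ i, B i (x i) (y i)

/-- `Σ^k(n₁,…,n_p)`: separable states of ensemble length at most `k`. -/
def SigmaK {p : ℕ} (n : Fin p → ℕ) (k : ℕ) :
    Set (Matrix (∀ i, Fin (n i)) (∀ i, Fin (n i)) ℂ) :=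
  {A | ∃ (l : Fin k → ℝ) (B : Fin k → ∀ i, Matrix (Fin (n i)) (Fin (n i)) ℂ),
    (∀ j, 0 ≤ l j) ∧ (∑ j, l j) = 1 ∧ (∀ j i, IsDensityMatrix (B j i)) ∧
    A = ∑ j, l j • prodMat n (B j)}

/-- `Σ_pure^k(n₁,…,n_p)`: separable states of pure-state ensemble length at most `k`. -/
def SigmaPureK {p : ℕ} (n : Fin p → ℕ) (k : ℕ) :
    Set (Matrix (∀ i, Fin (n i)) (∀ i, Fin (n i)) ℂ) :=
  {A | ∃ (l : Fin k → ℝ) (B : Fin k → ∀ i, Matrix (Fin (n i)) (Fin (n i)) ℂ),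
    (∀ j, 0 ≤ l j) ∧ (∑ j, l j) = 1 ∧ (∀ j i, IsPureDensityMatrix (B j i)) ∧
    A = ∑ j, l j • prodMat n (B j)}

noncomputable instance {m : Type*} [Fintype m] : NormedAddCommGroup (Matrix m m ℂ) :=
  Matrix.normedAddCommGroup

noncomputable instance {m : Type*} [Fintype m] : MeasurableSpace (Matrix m m ℂ) := borel _

instance {m : Type*} [Fintype m] :
    @BorelSpace (Matrix m m ℂ) (NormedAddCommGroup.toMetricSpace.toUniformSpace.toTopologicalSpace) _ :=
  ⟨rfl⟩


open Module
open scoped NNReal ENNReal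

noncomputable instance {m : Type*} [Fintype m] : NormedSpace ℝ (Matrix m m ℂ) :=
  Matrix.normedSpace

/-- The real submodule of traceless Hermitian matrices. -/
noncomputable def hermT (m : ℕ) : Submodule ℝ (Matrix (Fin m) (Fin m) ℂ) where
  carrier := {A | A.conjTranspose = A ∧ A.trace = 0}
  add_mem' := by
    rintro A B ⟨hA, hA'⟩ ⟨hB, hB'⟩
    exact ⟨by rw [Matrix.conjTranspose_add, hA, hB], by rw [Matrix.trace_add, hA', hB', add_zero]⟩
  zero_mem' := ⟨by simp, by simp⟩
  smul_mem' := by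
    rintro r A ⟨hA, hA'⟩
    refine ⟨?_, ?_⟩
    · rw [Matrix.conjTranspose_smul, hA, star_trivial]
    · rw [Matrix.trace_smul, hA', smul_zero]

/-- The coordinate injection for traceless Hermitian matrices. -/
noncomputable def hermCoord (m : ℕ) :
    Matrix (Fin (m + 1)) (Fin (m + 1)) ℂ →ₗ[ℝ]
      ({q : Fin (m + 1) × Fin (m + 1) // q ≠ (Fin.last m, Fin.last m)} → ℝ) where
  toFun A q := if q.1.1 < q.1.2 then (A q.1.1 q.1.2).re
    else if q.1.2 < q.1.1 then (A q.1.2 q.1.1).im else (A q.1.1 q.1.1).re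
  map_add' A B := by
    funext q
    simp only [Matrix.add_apply, Complex.add_re, Complex.add_im, Pi.add_apply]
    split_ifs <;> simp
  map_smul' r A := by
    funext q
    simp only [Matrix.smul_apply, Complex.real_smul, Complex.re_ofReal_mul,
      Complex.im_ofReal_mul, RingHom.id_apply, Pi.smul_apply, smul_eq_mul]
    split_ifs <;> simp

lemma hermT_eq_zero (m : ℕ) (A : Matrix (Fin (m + 1)) (Fin (m + 1)) ℂ)
    (hA : A ∈ hermT (m + 1)) (h0 : hermCoord m A = 0) : A = 0 := by
  obtain ⟨hH, htr⟩ := hA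
  have hstar : ∀ a b, A b a = star (A a b) := by
    intro a b
    conv_lhs => rw [← hH]
    rfl
  have hq : ∀ (q : Fin (m+1) × Fin (m+1)) (hq : q ≠ (Fin.last m, Fin.last m)),
      (if q.1 < q.2 then (A q.1 q.2).re else if q.2 < q.1 then (A q.2 q.1).im
        else (A q.1 q.1).re) = 0 := by
    intro q hq'
    have := congrFun h0 ⟨q, hq'⟩
    simpa [hermCoord] using this
  have hlt : ∀ a b : Fin (m+1), a < b → A a b = 0 := by
    intro a b hab
    have h1 := hq (a, b) (by simp [Prod.ext_iff]; intro h1 h2; rw [h1, h2] at hab; exact lt_irrefl _ hab)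
    have h2 := hq (b, a) (by simp [Prod.ext_iff]; intro h1 h2; rw [h1, h2] at hab; exact lt_irrefl _ hab)
    rw [if_pos hab] at h1
    rw [if_neg (not_lt.2 hab.le), if_pos hab] at h2
    exact Complex.ext h1 h2
  have hdiagIm : ∀ a : Fin (m+1), (A a a).im = 0 := by
    intro a
    have := hstar a a
    have h2 : (A a a).im = -(A a a).im := by
      conv_lhs => rw [this]
      simp
    linarith
  have hdiag : ∀ a : Fin (m+1), a ≠ Fin.last m → A a a = 0 := by
    intro a ha
    have h1 := hq (a, a) (by simp [Prod.ext_iff, ha])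
    rw [if_neg (lt_irrefl a), if_neg (lt_irrefl a)] at h1
    exact Complex.ext h1 (hdiagIm a)
  have hlast : A (Fin.last m) (Fin.last m) = 0 := by
    have := htr
    rw [Matrix.trace] at this
    rw [Fin.sum_univ_castSucc] at this
    have hz : ∀ j : Fin m, Matrix.diag A j.castSucc = 0 := fun j =>
      hdiag j.castSucc (Fin.castSucc_lt_last j).ne
    simp only [hz, Finset.sum_const_zero, zero_add] at this
    exact this
  ext a b
  rcases lt_trichotomy a b with h | h | h
  · simp [hlt a b h]
  · subst h
    by_cases ha : a = Fin.last m
    · subst ha; simp [hlast]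
    · simp [hdiag a ha]
  · rw [hstar b a, hlt b a h]
    simp

lemma finrank_hermT_le (m : ℕ) : finrank ℝ (hermT (m + 1)) + 1 ≤ (m + 1) ^ 2 := by
  have hinj : Function.Injective ((hermCoord m).domRestrict (hermT (m + 1))) := by
    intro x y hxy
    have : ((x : Matrix (Fin (m+1)) (Fin (m+1)) ℂ) - (y : Matrix (Fin (m+1)) (Fin (m+1)) ℂ)) = 0 := by
      apply hermT_eq_zero m _ (sub_mem x.2 y.2)
      have : hermCoord m (x - y) = 0 := by
        rw [map_sub, sub_eq_zero]
        exact hxy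
      simpa using this
    exact Subtype.ext (sub_eq_zero.1 this)
  have hle := LinearMap.finrank_le_finrank_of_injective hinj
  rw [finrank_fintype_fun_eq_card] at hle
  have hcard : Fintype.card {q : Fin (m + 1) × Fin (m + 1) // q ≠ (Fin.last m, Fin.last m)}
      = (m + 1) ^ 2 - 1 := by
    rw [Fintype.card_subtype_compl]
    simp [Fintype.card_prod, sq]
  rw [hcard] at hle
  have : 1 ≤ (m+1)^2 := Nat.one_le_pow _ _ (Nat.succ_pos m)
  omega

/-- The hyperplane of sum-zero vectors. -/
noncomputable def sumZero (k : ℕ) : Submodule ℝ (Fin k → ℝ) where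
  carrier := {v | ∑ j, v j = 0}
  add_mem' := by
    intro a b ha hb
    simp only [Set.mem_setOf_eq, Pi.add_apply, Finset.sum_add_distrib] at *
    rw [ha, hb, add_zero]
  zero_mem' := by simp
  smul_mem' := by
    intro r a ha
    simp only [Set.mem_setOf_eq, Pi.smul_apply, smul_eq_mul, ← Finset.mul_sum] at *
    rw [ha, mul_zero]

lemma finrank_sumZero_le (m : ℕ) : finrank ℝ (sumZero (m + 1)) ≤ m := by
  have hinj : Function.Injective
      ((LinearMap.funLeft ℝ ℝ (Fin.castSucc)).domRestrict (sumZero (m + 1))) := by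
    intro x y hxy
    have hcs : ∀ j : Fin m, (x : Fin (m+1) → ℝ) j.castSucc = (y : Fin (m+1) → ℝ) j.castSucc :=
      fun j => congrFun hxy j
    have hx := x.2
    have hy := y.2
    simp only [sumZero, Submodule.mem_mk, AddSubmonoid.mem_mk, AddSubsemigroup.mem_mk,
      Set.mem_setOf_eq] at hx hy
    rw [Fin.sum_univ_castSucc] at hx hy
    apply Subtype.ext
    funext a
    induction a using Fin.lastCases with
    | last =>
      have : ∑ j : Fin m, (x : Fin (m+1) → ℝ) j.castSucc
          = ∑ j : Fin m, (y : Fin (m+1) → ℝ) j.castSucc :=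
        Finset.sum_congr rfl fun j _ => hcs j
      nlinarith [hx, hy]
    | cast j => exact hcs j
  have hle := LinearMap.finrank_le_finrank_of_injective hinj
  rwa [finrank_fintype_fun_eq_card, Fintype.card_fin] at hle

lemma mem_sumZero {k : ℕ} (v : Fin k → ℝ) : v ∈ sumZero k ↔ ∑ j, v j = 0 := Iff.rfl

/-- entry evaluation as a continuous linear map -/
noncomputable def entryCLM {m : ℕ} (a b : Fin m) : Matrix (Fin m) (Fin m) ℂ →L[ℝ] ℂ :=
  LinearMap.toContinuousLinearMap
    { toFun := fun A => A a b, map_add' := fun _ _ => rfl, map_smul' := fun _ _ => rfl }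

set_option maxHeartbeats 1000000 in
set_option synthInstance.maxHeartbeats 400000 in
/-- if `k·(1 - p + Σ nᵢ²) < N²` (as integers), then `Σ^k(n₁,…,n_p)` has
`(N²-1)`-dimensional Hausdorff measure zero, `N = n₁⋯n_p`. -/
theorem sigmaK_measure_zero_of_dim_count {p : ℕ} (n : Fin p → ℕ) (hn : ∀ i, 1 ≤ n i) (k : ℕ)
    (hk : (k : ℤ) * (1 - (p : ℤ) + ∑ i, (n i : ℤ) ^ 2) < ((∏ i, n i : ℕ) : ℤ) ^ 2) :
    μH[((∏ i, n i : ℕ) : ℝ) ^ 2 - 1] (SigmaK n k) = 0 := by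
  obtain rfl | ⟨m, rfl⟩ : k = 0 ∨ ∃ m, k = m + 1 := by
    cases k with
    | zero => exact Or.inl rfl
    | succ m => exact Or.inr ⟨m, rfl⟩
  · have hempty : SigmaK n 0 = ∅ := by
      ext A
      simp only [SigmaK, Set.mem_setOf_eq, Set.mem_empty_iff_false, iff_false]
      rintro ⟨l, B, -, hsum, -, -⟩
      simp at hsum
    rw [hempty, measure_empty]
  set K := m + 1 with hK
  set N : ℕ := ∏ i, n i with hN
  -- the parameter space and the parametrization
  let E := sumZero K × (Fin K → ∀ i, hermT (n i))
  let D : ∀ i, Matrix (Fin (n i)) (Fin (n i)) ℂ := fun i => ((n i : ℝ)⁻¹) • 1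
  let F : E → Matrix (∀ i, Fin (n i)) (∀ i, Fin (n i)) ℂ := fun e =>
    ∑ j, (((K : ℝ))⁻¹ + (e.1 : Fin K → ℝ) j) •
      prodMat n (fun i => D i + (e.2 j i : Matrix (Fin (n i)) (Fin (n i)) ℂ))
  have hKne : (K : ℝ) ≠ 0 := by positivity
  -- range inclusion
  have hsub : SigmaK n K ⊆ Set.range F := by
    rintro A ⟨l, B, hl0, hl1, hB, rfl⟩
    refine ⟨⟨⟨fun j => l j - (K : ℝ)⁻¹, ?_⟩,
      fun j i => ⟨B j i - D i, ?_, ?_⟩⟩, ?_⟩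
    · rw [mem_sumZero]
      rw [Finset.sum_sub_distrib, hl1, Finset.sum_const, Finset.card_univ, Fintype.card_fin,
        nsmul_eq_mul]
      rw [mul_inv_cancel₀ hKne, sub_self]
    · have hb := (hB j i).1.1
      rw [Matrix.conjTranspose_sub, hb, Matrix.conjTranspose_smul, Matrix.conjTranspose_one,
        star_trivial]
    · rw [Matrix.trace_sub, (hB j i).2, Matrix.trace_smul, Matrix.trace_one,
        Complex.real_smul]
      have hni : ((n i : ℂ)) ≠ 0 := Nat.cast_ne_zero.mpr (by have := hn i; omega)
      simp only [Fintype.card_fin]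
      push_cast
      rw [inv_mul_cancel₀ hni, sub_self]
    · show F _ = _
      simp only [F]
      refine Finset.sum_congr rfl fun j _ => ?_
      congr 1
      · ring
      · funext i
        simp
  -- smoothness
  have hF : ContDiff ℝ 1 F := by
    apply ContDiff.sum
    intro j _
    apply ContDiff.fun_smul
    · exact contDiff_const.add
        (by have := (((ContinuousLinearMap.proj j).comp
          (((sumZero K).subtypeL).comp (ContinuousLinearMap.fst ℝ _ _))) : E →L[ℝ] ℝ).contDiff (n := 1)
            exact this)
    · have hinner : ContDiff ℝ 1 (fun e : E =>
          (fun i => D i + ((e.2 j i : Matrix (Fin (n i)) (Fin (n i)) ℂ)))) := by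
        apply contDiff_pi.mpr
        intro i
        exact contDiff_const.add
          ((((hermT (n i)).subtypeL).comp
            ((ContinuousLinearMap.proj i : (∀ i', hermT (n i')) →L[ℝ] hermT (n i)).comp
              ((ContinuousLinearMap.proj j :
                  (Fin K → ∀ i', hermT (n i')) →L[ℝ] (∀ i', hermT (n i'))).comp
                (ContinuousLinearMap.snd ℝ (sumZero K) (Fin K → ∀ i', hermT (n i')))))).contDiff)
      have hout : ContDiff ℝ 1
          (fun B : ∀ i, Matrix (Fin (n i)) (Fin (n i)) ℂ => prodMat n B) := by
        apply contDiff_pi.mpr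
        intro x
        apply contDiff_pi.mpr
        intro y
        show ContDiff ℝ 1 (fun B : ∀ i, Matrix (Fin (n i)) (Fin (n i)) ℂ
          => ∏ i, B i (x i) (y i))
        apply contDiff_prod
        intro i _
        exact ((entryCLM (x i) (y i)).comp
          (ContinuousLinearMap.proj i : (∀ i', Matrix (Fin (n i')) (Fin (n i')) ℂ) →L[ℝ]
            Matrix (Fin (n i)) (Fin (n i)) ℂ)).contDiff
      exact hout.comp hinner
  -- dimension count
  have hNpos : 0 < N := by rw [hN]; exact Finset.prod_pos fun i _ => hn i
  have h1le : 1 ≤ N ^ 2 := Nat.one_le_pow _ _ hNpos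
  have h5 : (finrank ℝ E : ℤ)
      = (finrank ℝ (sumZero K) : ℤ) + (K : ℤ) * ∑ i, (finrank ℝ (hermT (n i)) : ℤ) := by
    have h1 : finrank ℝ E = finrank ℝ (sumZero K) + K * ∑ i, finrank ℝ (hermT (n i)) := by
      rw [show finrank ℝ E = finrank ℝ (sumZero K) + finrank ℝ (Fin K → ∀ i, hermT (n i))
        from Module.finrank_prod]
      congr 1
      haveI : ∀ i, Module.Finite ℝ (hermT (n i)) := fun i =>
        Module.Finite.of_injective (hermT (n i)).subtype Subtype.val_injective
      rw [Module.finrank_pi_fintype, Finset.sum_const, Finset.card_univ, Fintype.card_fin,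
        smul_eq_mul]
      exact congrArg _ (Module.finrank_pi_fintype ℝ)
    rw [h1]
    push_cast
    ring
  have h2 : ∀ i : Fin p, (finrank ℝ (hermT (n i)) : ℤ) ≤ (n i : ℤ) ^ 2 - 1 := by
    intro i
    obtain ⟨m', hm'⟩ : ∃ m', n i = m' + 1 := ⟨n i - 1, by have := hn i; omega⟩
    have h := finrank_hermT_le m'
    rw [← hm'] at h
    zify at h
    linarith
  have h3 : (finrank ℝ (sumZero K) : ℤ) ≤ (K : ℤ) - 1 := by
    have h := finrank_sumZero_le m
    rw [← hK] at h
    zify at h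
    rw [hK]
    push_cast
    linarith
  have h4 : (∑ i, (finrank ℝ (hermT (n i)) : ℤ)) ≤ (∑ i, (n i : ℤ) ^ 2) - p := by
    calc (∑ i, (finrank ℝ (hermT (n i)) : ℤ)) ≤ ∑ i, ((n i : ℤ) ^ 2 - 1) :=
          Finset.sum_le_sum fun i _ => h2 i
      _ = (∑ i, (n i : ℤ) ^ 2) - p := by
          rw [Finset.sum_sub_distrib]
          simp
  have hrankE : (finrank ℝ E : ℤ) ≤ (K : ℤ) * (1 - (p : ℤ) + ∑ i, (n i : ℤ) ^ 2) - 1 := by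
    calc (finrank ℝ E : ℤ)
        = (finrank ℝ (sumZero K) : ℤ) + (K : ℤ) * ∑ i, (finrank ℝ (hermT (n i)) : ℤ) := h5
      _ ≤ ((K : ℤ) - 1) + (K : ℤ) * ((∑ i, (n i : ℤ) ^ 2) - (p : ℤ)) :=
          add_le_add h3 (mul_le_mul_of_nonneg_left h4 (by positivity))
      _ = (K : ℤ) * (1 - (p : ℤ) + ∑ i, (n i : ℤ) ^ 2) - 1 := by ring
  have hfr : finrank ℝ E < N ^ 2 - 1 := by
    zify [h1le]
    linarith
  -- conclusion
  have hNR : ((N : ℕ) : ℝ) ^ 2 - 1 = (((N ^ 2 - 1 : ℕ) : ℝ≥0) : ℝ) := by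
    rw [NNReal.coe_natCast]
    push_cast [h1le]
    ring
  rw [hNR]
  refine hausdorffMeasure_of_dimH_lt ?_
  refine lt_of_le_of_lt (le_trans (dimH_mono hsub) hF.dimH_range_le) ?_
  have hlt : ((finrank ℝ E : ℕ) : ℝ≥0∞) < ((N ^ 2 - 1 : ℕ) : ℝ≥0∞) := by exact_mod_cast hfr
  simpa using hlt
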